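/- arXiv:math-ph/0605050 — 3 statements merged into one kernel-verified Lean document; each statement's English description precedes it below -/
import Mathlib

section
/- Gap inequality for the WKB action: let Q : ℝ → ℝ be even, continuous, integrable, strictly decreasing on [0,∞) with unique maximum at 0. For 0 < η ≤ √(Q(0)) let x₊(η) ≥ 0 be the unique point with Q(x₊(η)) = η², set x₋(η) = −x₊(η), and define the action Φ(η) = ∫_{x₋(η)}^{x₊(η)} (Q(y) − η²)^{1/2} dy. Then for all 0 < η' < η ≤ √(Q(0)): Φ(η') − Φ(η) ≤ (η − η')^{1/2} · (η + η')^{1/2} · ( x₊(η') − x₋(η') ). -/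
open MeasureTheory Set intervalIntegral

/-!
Since `√(u + d) ≤ √u + √d` for `d ≥ 0` (also for `u < 0`, where `Real.sqrt u = 0`), the two
integrands differ pointwise by at most `√(η² - η'²) = √(η - η') √(η + η')`. The integrand
`√(Q - η²)` vanishes for `|y| ≥ x₊(η)`, so the action at `η` may equally be integrated over
`[x₋(η'), x₊(η')]`, and integrating the pointwise bound over that interval gives the claim.
-/

theorem Real.sqrt_add_sub_sqrt_le (u : ℝ) {d : ℝ} (hd : 0 ≤ d) : √(u + d) - √u ≤ √d := by
  rcases le_or_gt 0 u with hu | hu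
  · have : √(u + d) ≤ √u + √d := by
      rw [Real.sqrt_le_iff]
      refine ⟨by positivity, ?_⟩
      nlinarith [Real.sq_sqrt hu, Real.sq_sqrt hd, Real.sqrt_nonneg u, Real.sqrt_nonneg d]
    linarith
  · rw [Real.sqrt_eq_zero_of_nonpos hu.le, sub_zero]
    exact Real.sqrt_le_sqrt (by linarith)

theorem Function.Even.apply_le_of_le_abs {Q : ℝ → ℝ} (hQeven : Function.Even Q)
    (hQ : AntitoneOn Q (Ici 0)) {b y : ℝ} (hb : 0 ≤ b) (hby : b ≤ |y|) : Q y ≤ Q b := by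
  have hQy : Q |y| = Q y := by
    rcases abs_choice y with h | h <;> rw [h]
    exact hQeven y
  rw [← hQy]
  exact hQ hb (hb.trans hby) hby

theorem intervalIntegral.integral_neg_self_eq_of_eq_zero_of_le_abs {E : Type*}
    [NormedAddCommGroup E] [NormedSpace ℝ E] {f : ℝ → E} {a b : ℝ} (hb : 0 ≤ b) (hba : b ≤ a)
    (hf : ∀ y, b ≤ |y| → f y = 0) : ∫ y in -a..a, f y = ∫ y in -b..b, f y := by
  rw [integral_of_le (by linarith), integral_of_le (by linarith)]
  refine setIntegral_eq_of_subset_of_forall_sdiff_eq_zero measurableSet_Ioc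
    (Ioc_subset_Ioc (by linarith) hba) fun y ⟨_, hyb⟩ => hf y ?_
  by_contra! h
  exact hyb ⟨(abs_lt.mp h).1, (abs_lt.mp h).2.le⟩

theorem stmt_9_general (Q : ℝ → ℝ) (hQeven : ∀ x : ℝ, Q (-x) = Q x) (hQc : Continuous Q)
    (hQdec : StrictAntiOn Q (Ici 0))
    (xp : ℝ → ℝ)
    (hxp : ∀ η : ℝ, 0 < η → η ≤ Real.sqrt (Q 0) → 0 ≤ xp η ∧ Q (xp η) = η ^ 2)
    (η' η : ℝ) (h1 : 0 < η') (h2 : η' < η) (h3 : η ≤ Real.sqrt (Q 0)) :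
    (∫ y in (-(xp η'))..(xp η'), Real.sqrt (Q y - η' ^ 2)) -
      (∫ y in (-(xp η))..(xp η), Real.sqrt (Q y - η ^ 2)) ≤
    Real.sqrt (η - η') * Real.sqrt (η + η') * (xp η' - (-(xp η'))) := by
  obtain ⟨hb0, hQb⟩ := hxp η (h1.trans h2) h3
  obtain ⟨ha0, hQa⟩ := hxp η' h1 (h2.le.trans h3)
  have hsq : η' ^ 2 < η ^ 2 := by gcongr
  have hba : xp η ≤ xp η' := (hQdec.le_iff_ge ha0 hb0).mp (by rw [hQa, hQb]; exact hsq.le)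
  have hvanish : ∀ y, xp η ≤ |y| → √(Q y - η ^ 2) = 0 := fun y hy =>
    Real.sqrt_eq_zero_of_nonpos (by
      linarith [Function.Even.apply_le_of_le_abs hQeven hQdec.antitoneOn hb0 hy])
  have hfactor : √(η - η') * √(η + η') = √(η ^ 2 - η' ^ 2) := by
    rw [← Real.sqrt_mul (sub_nonneg.2 h2.le)]
    congr 1
    ring
  have hint : ∀ c : ℝ, IntervalIntegrable (fun y => √(Q y - c)) volume (-xp η') (xp η') :=
    fun c => ((hQc.sub continuous_const).sqrt).intervalIntegrable _ _
  rw [← integral_neg_self_eq_of_eq_zero_of_le_abs hb0 hba hvanish,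
    ← integral_sub (hint _) (hint _), hfactor]
  calc ∫ y in -xp η'..xp η', √(Q y - η' ^ 2) - √(Q y - η ^ 2)
      ≤ ∫ _ in -xp η'..xp η', √(η ^ 2 - η' ^ 2) := by
        refine integral_mono_on (by linarith) ((hint _).sub (hint _)) intervalIntegrable_const
          fun y _ => ?_
        have := Real.sqrt_add_sub_sqrt_le (Q y - η ^ 2) (sub_nonneg.2 hsq.le)
        rwa [sub_add_sub_cancel] at this
    _ = √(η ^ 2 - η' ^ 2) * (xp η' - -xp η') := by
        rw [intervalIntegral.integral_const, smul_eq_mul, mul_comm]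

/-- **Gap inequality for the WKB action.** For an even, continuous, integrable potential `Q`,
strictly decreasing on `[0,∞)`, with turning points `x₊(η) ≥ 0` satisfying `Q(x₊(η)) = η²`
and `x₋(η) = -x₊(η)`, the action `Φ(η) = ∫_{x₋(η)}^{x₊(η)} √(Q(y) - η²) dy` satisfies, for
`0 < η' < η ≤ √(Q 0)`:
`Φ(η') - Φ(η) ≤ (η - η')^{1/2} (η + η')^{1/2} (x₊(η') - x₋(η'))`. -/
theorem stmt_9 (Q : ℝ → ℝ) (hQeven : ∀ x : ℝ, Q (-x) = Q x) (hQc : Continuous Q)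
    (hQint : Integrable Q)
    (hQdec : StrictAntiOn Q (Ici 0))
    (xp : ℝ → ℝ)
    (hxp : ∀ η : ℝ, 0 < η → η ≤ Real.sqrt (Q 0) → 0 ≤ xp η ∧ Q (xp η) = η ^ 2)
    (η' η : ℝ) (h1 : 0 < η') (h2 : η' < η) (h3 : η ≤ Real.sqrt (Q 0)) :
    (∫ y in (-(xp η'))..(xp η'), Real.sqrt (Q y - η' ^ 2)) -
      (∫ y in (-(xp η))..(xp η), Real.sqrt (Q y - η ^ 2)) ≤
    Real.sqrt (η - η') * Real.sqrt (η + η') * (xp η' - (-(xp η'))) :=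
  stmt_9_general Q hQeven hQc hQdec xp hxp η' η h1 h2 h3
end

section
/- Positivity of the real part of the quadratic form of the kernel operator: for every x > 0, every w ∈ ℂ with Re w > 0, and every h ∈ L²([0,x];ℂ), one has Re ∫₀^x conj(h(y)) ( ∫₀^x h(s)·Φ(s,y,w) ds ) dy ≥ 0. Consequently the operator Id + K_{x,w} on L²([0,x]), where K_{x,w}(h)(y) = ∫₀^x h(s)Φ(s,y,w)ds, has trivial kernel. -/
/-! With `ψ_k(s) = sin(ks)/k` real and `c(k) = phiWeight w k = (√(k²+w) − k)·2k/π`, the kernel is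
`Φ(s,y) = ∫₀^∞ ψ_k(s) ψ_k(y) c(k) dk`, so by Fubini the quadratic form equals
`∫₀^∞ |∫₀^x h ψ_k|² c(k) dk`, whose real part is nonnegative because `Re √(k²+w) ≥ k`.
Absolute convergence of the triple integral comes from `|ψ_k| ≤ min(x, 1/k)` and
`|c(k)| ≤ |w|/π`, the latter from `(√(k²+w) − k)(√(k²+w) + k) = w`.
If `h + Kh = 0`, the form equals `−‖h‖²`, so `h = 0`. -/

open MeasureTheory Set

noncomputable section

/-- The kernel `Φ(x,y,w) = ∫₀^∞ (sin kx / k)(sin ky / k)(√(k²+w) − k)(2k/π) dk`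
(principal branch of the complex square root). -/
def Phi (x y : ℝ) (w : ℂ) : ℂ :=
  ∫ k in Ioi (0:ℝ),
    ((Real.sin (k * x) / k : ℝ) : ℂ) * ((Real.sin (k * y) / k : ℝ) : ℂ) *
      (((k : ℂ) ^ 2 + w) ^ ((1 : ℂ) / 2) - (k : ℂ)) * ((2 * k / Real.pi : ℝ) : ℂ)

open ComplexConjugate

theorem integral_prod_conj_mul_eq_norm_sq_mul {α : Type*} [MeasurableSpace α] {ν : Measure α}
    [SFinite ν] (h : α → ℂ) (f : α → ℝ) (z : ℂ) :
    ∫ p : α × α, conj (h p.1) * f p.1 * (h p.2 * f p.2 * z) ∂(ν.prod ν) =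
      (‖∫ s, h s * f s ∂ν‖ ^ 2 : ℂ) * z := by
  rw [integral_prod_mul (fun y => conj (h y) * f y) (fun s => h s * f s * z),
    integral_mul_const, ← mul_assoc, ← Complex.conj_mul']
  congr 2
  rw [← integral_conj]
  simp only [map_mul, Complex.conj_ofReal]

section KernelQuadraticForm

variable {α κ : Type*} [MeasurableSpace α] [MeasurableSpace κ] {ν : Measure α} {μ : Measure κ}
  {ψ : κ → α → ℝ} {c : κ → ℂ} {h : α → ℂ}

theorem integrable_kernel_triple_of_bound {g : κ → ℝ} (hh : Integrable h ν)
    (hψ : Measurable (Function.uncurry ψ)) (hc : AEStronglyMeasurable c μ)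
    (hψg : ∀ᵐ a ∂ν, ∀ k, |ψ k a| ≤ g k) (hgc : Integrable (fun k => g k ^ 2 * ‖c k‖) μ) :
    Integrable (fun q : (α × α) × κ =>
      conj (h q.1.1) * ψ q.2 q.1.1 * (h q.1.2 * ψ q.2 q.1.2 * c q.2)) ((ν.prod ν).prod μ) := by
  have hψ' (p : (α × α) × κ → α) (hp : Measurable p) :
      AEStronglyMeasurable (fun q => (ψ q.2 (p q) : ℂ)) ((ν.prod ν).prod μ) :=
    (Complex.measurable_ofReal.comp (hψ.comp (measurable_snd.prodMk hp))).aestronglyMeasurable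
  have hconj : AEStronglyMeasurable (fun a => conj (h a)) ν :=
    Complex.continuous_conj.comp_aestronglyMeasurable hh.1
  refine ((hh.norm.mul_prod hh.norm).mul_prod hgc).mono' ?_ ?_
  · exact (hconj.comp_fst.comp_fst.mul (hψ' _ (measurable_fst.comp measurable_fst))).mul
      ((hh.1.comp_snd.comp_fst.mul (hψ' _ (measurable_snd.comp measurable_fst))).mul hc.comp_snd)
  · have hfst : ∀ᵐ q ∂((ν.prod ν).prod μ), ∀ k, |ψ k q.1.1| ≤ g k :=
      Measure.quasiMeasurePreserving_fst.ae (Measure.quasiMeasurePreserving_fst.ae hψg)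
    have hsnd : ∀ᵐ q ∂((ν.prod ν).prod μ), ∀ k, |ψ k q.1.2| ≤ g k :=
      Measure.quasiMeasurePreserving_fst.ae (Measure.quasiMeasurePreserving_snd.ae hψg)
    filter_upwards [hfst, hsnd] with q h1 h2
    simp only [norm_mul, RCLike.norm_conj, Complex.norm_real, Real.norm_eq_abs]
    calc ‖h q.1.1‖ * |ψ q.2 q.1.1| * (‖h q.1.2‖ * |ψ q.2 q.1.2| * ‖c q.2‖)
        ≤ ‖h q.1.1‖ * g q.2 * (‖h q.1.2‖ * g q.2 * ‖c q.2‖) := by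
          have hg : 0 ≤ g q.2 := (abs_nonneg _).trans (h1 q.2)
          gcongr
          exacts [h1 q.2, h2 q.2]
      _ = ‖h q.1.1‖ * ‖h q.1.2‖ * (g q.2 ^ 2 * ‖c q.2‖) := by ring

variable [SFinite ν] [SFinite μ]

theorem integral_conj_mul_integral_kernel_eq (hint : Integrable (fun q : (α × α) × κ =>
      conj (h q.1.1) * ψ q.2 q.1.1 * (h q.1.2 * ψ q.2 q.1.2 * c q.2)) ((ν.prod ν).prod μ)) :
    ∫ y, conj (h y) * ∫ s, h s * ∫ k, ψ k s * ψ k y * c k ∂μ ∂ν ∂ν =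
      ∫ k, (‖∫ s, h s * ψ k s ∂ν‖ ^ 2 : ℂ) * c k ∂μ := by
  set G := fun q : (α × α) × κ => conj (h q.1.1) * ψ q.2 q.1.1 * (h q.1.2 * ψ q.2 q.1.2 * c q.2)
  have hG : ∀ y s, conj (h y) * (h s * ∫ k, ψ k s * ψ k y * c k ∂μ) = ∫ k, G ((y, s), k) ∂μ := by
    intro y s
    rw [← integral_const_mul, ← integral_const_mul]
    congr 1 with k
    simp only [G]
    ring
  calc ∫ y, conj (h y) * ∫ s, h s * ∫ k, ψ k s * ψ k y * c k ∂μ ∂ν ∂ν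
      = ∫ y, ∫ s, ∫ k, G ((y, s), k) ∂μ ∂ν ∂ν := by
        congr 1 with y
        rw [← integral_const_mul]
        exact integral_congr_ae (.of_forall (hG y))
    _ = ∫ p, ∫ k, G (p, k) ∂μ ∂(ν.prod ν) := (integral_prod _ hint.integral_prod_left).symm
    _ = ∫ k, ∫ p, G (p, k) ∂(ν.prod ν) ∂μ := integral_integral_swap hint
    _ = ∫ k, (‖∫ s, h s * ψ k s ∂ν‖ ^ 2 : ℂ) * c k ∂μ := by
        simp only [G, integral_prod_conj_mul_eq_norm_sq_mul]

theorem re_integral_conj_mul_integral_kernel_nonneg (hint : Integrable (fun q : (α × α) × κ =>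
      conj (h q.1.1) * ψ q.2 q.1.1 * (h q.1.2 * ψ q.2 q.1.2 * c q.2)) ((ν.prod ν).prod μ))
    (hc : ∀ᵐ k ∂μ, 0 ≤ (c k).re) :
    0 ≤ (∫ y, conj (h y) * ∫ s, h s * ∫ k, ψ k s * ψ k y * c k ∂μ ∂ν ∂ν).re := by
  have hB : Integrable (fun k => (‖∫ s, h s * ψ k s ∂ν‖ ^ 2 : ℂ) * c k) μ := by
    refine hint.integral_prod_right.congr (.of_forall fun k => ?_)
    exact integral_prod_conj_mul_eq_norm_sq_mul h (ψ k) (c k)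
  rw [integral_conj_mul_integral_kernel_eq hint, ← RCLike.re_to_complex, ← integral_re hB]
  refine integral_nonneg_of_ae ?_
  filter_upwards [hc] with k hk
  rw [RCLike.re_to_complex, ← Complex.ofReal_pow, Complex.re_ofReal_mul]
  positivity

end KernelQuadraticForm

theorem ae_eq_zero_of_add_eq_zero_of_re_integral_conj_mul_nonneg {α : Type*} [MeasurableSpace α]
    {ν : Measure α} {h g : α → ℂ} (hh : MemLp h 2 ν) (hg : ∀ᵐ y ∂ν, h y + g y = 0)
    (hpos : 0 ≤ (∫ y, conj (h y) * g y ∂ν).re) : ∀ᵐ y ∂ν, h y = 0 := by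
  have hsq : Integrable (fun y => ‖h y‖ ^ 2) ν := (memLp_two_iff_integrable_sq_norm hh.1).mp hh
  have hneg : ∫ y, conj (h y) * g y ∂ν = -((∫ y, ‖h y‖ ^ 2 ∂ν : ℝ) : ℂ) := by
    rw [integral_complex_ofReal.symm, ← integral_neg]
    refine integral_congr_ae ?_
    filter_upwards [hg] with y hy
    rw [eq_neg_of_add_eq_zero_right hy, mul_neg, Complex.conj_mul']
    push_cast
    rfl
  have hzero : ∫ y, ‖h y‖ ^ 2 ∂ν = 0 := by
    rw [hneg, Complex.neg_re, Complex.ofReal_re] at hpos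
    exact le_antisymm (by linarith) (integral_nonneg fun y => by positivity)
  filter_upwards [(integral_eq_zero_iff_of_nonneg (fun y => by positivity) hsq).mp hzero] with y hy
  simpa using hy

def phiWeight (w : ℂ) (k : ℝ) : ℂ :=
  (((k : ℂ) ^ 2 + w) ^ ((1 : ℂ) / 2) - k) * ((2 * k / Real.pi : ℝ) : ℂ)

theorem Phi_eq_integral_phiWeight (s y : ℝ) (w : ℂ) :
    Phi s y w = ∫ k in Ioi (0:ℝ),
      ((Real.sin (k * s) / k : ℝ) : ℂ) * ((Real.sin (k * y) / k : ℝ) : ℂ) * phiWeight w k := by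
  simp only [Phi, phiWeight, mul_assoc]

@[fun_prop]
theorem measurable_phiWeight (w : ℂ) : Measurable (phiWeight w) := by
  unfold phiWeight
  fun_prop

theorem le_re_cpow_half_sq_add (k : ℝ) {w : ℂ} (hw : 0 ≤ w.re) :
    k ≤ (((k : ℂ) ^ 2 + w) ^ ((1 : ℂ) / 2)).re := by
  rw [one_div, Complex.cpow_inv_two_re]
  apply Real.le_sqrt_of_sq_le
  have hre : ((k : ℂ) ^ 2 + w).re = k ^ 2 + w.re := by simp [← Complex.ofReal_pow]
  linarith [Complex.re_le_norm ((k : ℂ) ^ 2 + w)]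

theorem phiWeight_re_nonneg {k : ℝ} (hk : 0 ≤ k) {w : ℂ} (hw : 0 ≤ w.re) :
    0 ≤ (phiWeight w k).re := by
  rw [phiWeight, Complex.mul_re, Complex.ofReal_re, Complex.ofReal_im, mul_zero, sub_zero,
    Complex.sub_re, Complex.ofReal_re]
  exact mul_nonneg (sub_nonneg.mpr (le_re_cpow_half_sq_add k hw)) (by positivity)

theorem norm_phiWeight_le {k : ℝ} (hk : 0 ≤ k) {w : ℂ} (hw : 0 ≤ w.re) :
    ‖phiWeight w k‖ ≤ ‖w‖ / Real.pi := by
  have hsq : (((k : ℂ) ^ 2 + w) ^ ((1 : ℂ) / 2)) ^ 2 = (k : ℂ) ^ 2 + w := by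
    rw [one_div]; exact_mod_cast Complex.cpow_nat_inv_pow _ two_ne_zero
  set r := ((k : ℂ) ^ 2 + w) ^ ((1 : ℂ) / 2)
  have hr : (r - k) * (r + k) = w := by linear_combination hsq
  have hrk : 2 * k ≤ ‖r + k‖ := by
    refine le_trans ?_ (Complex.re_le_norm _)
    simp only [Complex.add_re, Complex.ofReal_re]
    linarith [le_re_cpow_half_sq_add k hw]
  calc ‖phiWeight w k‖ = ‖r - k‖ * (2 * k) / Real.pi := by
        rw [phiWeight, norm_mul, Complex.norm_real, Real.norm_of_nonneg (by positivity)]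
        ring
    _ ≤ ‖r - k‖ * ‖r + k‖ / Real.pi := by gcongr
    _ = ‖w‖ / Real.pi := by rw [← norm_mul, hr]

theorem abs_sin_mul_div_le (k a : ℝ) : |Real.sin (k * a) / k| ≤ min |a| |k|⁻¹ := by
  rw [abs_div]
  refine le_min (div_le_of_le_mul₀ (abs_nonneg _) (abs_nonneg _) ?_) ?_
  · rw [mul_comm, ← abs_mul]
    exact Real.abs_sin_le_abs
  · rw [div_eq_mul_inv]
    exact mul_le_of_le_one_left (inv_nonneg.mpr (abs_nonneg _)) (Real.abs_sin_le_one _)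

theorem integrableOn_min_inv_abs_sq {x : ℝ} (hx : 0 < x) :
    IntegrableOn (fun k => min x |k|⁻¹ ^ 2) (Ioi (0 : ℝ)) := by
  have hmeas : AEStronglyMeasurable (fun k : ℝ => min x |k|⁻¹ ^ 2) volume := by
    fun_prop
  rw [← Ioc_union_Ioi_eq_Ioi (inv_pos.mpr hx).le]
  refine IntegrableOn.union ?_ ?_
  · refine (integrableOn_const (C := x ^ 2) (by simp)).mono' hmeas.restrict ?_
    filter_upwards with k
    rw [Real.norm_of_nonneg (sq_nonneg _)]
    exact pow_le_pow_left₀ (by positivity) (min_le_left _ _) 2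
  · refine (integrableOn_Ioi_rpow_of_lt (by norm_num : (-2 : ℝ) < -1) (inv_pos.mpr hx)).mono'
      hmeas.restrict ?_
    filter_upwards [ae_restrict_mem measurableSet_Ioi] with k hk
    have hk0 : 0 < k := (inv_pos.mpr hx).trans hk
    rw [Real.norm_of_nonneg (sq_nonneg _), Real.rpow_neg hk0.le, Real.rpow_two, ← inv_pow,
      abs_of_pos hk0]
    exact pow_le_pow_left₀ (by positivity) (min_le_right _ _) 2

theorem re_integral_conj_mul_integral_Phi_nonneg {x : ℝ} (hx : 0 < x) {w : ℂ} (hw : 0 ≤ w.re)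
    {h : ℝ → ℂ} (hh : MemLp h 2 (volume.restrict (Icc 0 x))) :
    0 ≤ (∫ y in Icc 0 x, conj (h y) * ∫ s in Icc 0 x, h s * Phi s y w).re := by
  have hψ : ∀ᵐ a ∂(volume.restrict (Icc 0 x)), ∀ k : ℝ, |Real.sin (k * a) / k| ≤ min x |k|⁻¹ := by
    filter_upwards [ae_restrict_mem measurableSet_Icc] with a ha k
    refine (abs_sin_mul_div_le k a).trans (min_le_min_right _ ?_)
    rw [abs_of_nonneg ha.1]
    exact ha.2
  have hgc : IntegrableOn (fun k => min x |k|⁻¹ ^ 2 * ‖phiWeight w k‖) (Ioi 0) := by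
    refine ((integrableOn_min_inv_abs_sq hx).mul_const (‖w‖ / Real.pi)).mono'
      (by fun_prop) ?_
    filter_upwards [ae_restrict_mem measurableSet_Ioi] with k hk
    rw [norm_mul, norm_norm, Real.norm_of_nonneg (sq_nonneg _)]
    gcongr
    exact norm_phiWeight_le (le_of_lt hk) hw
  have hint := integrable_kernel_triple_of_bound (hh.integrable one_le_two)
    (by fun_prop) (measurable_phiWeight w).aestronglyMeasurable hψ hgc
  simp only [Phi_eq_integral_phiWeight]
  refine re_integral_conj_mul_integral_kernel_nonneg hint ?_
  filter_upwards [ae_restrict_mem measurableSet_Ioi] with k hk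
  exact phiWeight_re_nonneg (le_of_lt hk) hw

/-- **Positivity of the real part of the quadratic form of the kernel operator.** For
`x > 0`, `Re w > 0` and `h ∈ L²([0,x];ℂ)`:
`Re ∫₀^x conj(h(y)) (∫₀^x h(s)Φ(s,y,w) ds) dy ≥ 0`; consequently `Id + K_{x,w}` has
trivial kernel. -/
theorem stmt_14 (x : ℝ) (hx : 0 < x) (w : ℂ) (hw : 0 < w.re)
    (h : ℝ → ℂ) (hh : MemLp h 2 (volume.restrict (Icc (0:ℝ) x))) :
    0 ≤ (∫ y in (0:ℝ)..x,
          (starRingEnd ℂ) (h y) * ∫ s in (0:ℝ)..x, h s * Phi s y w).re ∧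
    ((∀ᵐ y ∂(volume.restrict (Icc (0:ℝ) x)),
        h y + (∫ s in (0:ℝ)..x, h s * Phi s y w) = 0) →
      ∀ᵐ y ∂(volume.restrict (Icc (0:ℝ) x)), h y = 0) := by
  have hIcc (f : ℝ → ℂ) : ∫ s in (0:ℝ)..x, f s = ∫ s in Icc 0 x, f s := by
    rw [intervalIntegral.integral_of_le hx.le, integral_Icc_eq_integral_Ioc]
  have hpos : 0 ≤ (∫ y in Icc 0 x, conj (h y) * ∫ s in (0:ℝ)..x, h s * Phi s y w).re := by
    simpa only [hIcc] using re_integral_conj_mul_integral_Phi_nonneg hx hw.le hh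
  exact ⟨hIcc _ ▸ hpos,
    fun hyp => ae_eq_zero_of_add_eq_zero_of_re_integral_conj_mul_nonneg hh hyp hpos⟩

end
end

section
/- Lower L² bound for the perturbed identity operator: for every x > 0, every w ∈ ℂ with Re w > 0, and every h ∈ L²([0,x];ℂ), one has ‖h‖_{L²([0,x])} ≤ ‖ y ↦ h(y) + ∫₀^x h(s)·Φ(s,y,w) ds ‖_{L²([0,x])}. -/
open MeasureTheory Set

noncomputable section

/-!
Write `Φ(s, y) = ∫₀^∞ c(k) sin(ks) sin(ky) dk` with `c(k) = (2 / (πk)) (√(k² + w) − k)`, and let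
`K h (y) = ∫₀^x h(s) Φ(s, y) ds`. By Fubini, `⟨h, K h⟩ = ∫₀^∞ c(k) |ĥ(k)|² dk` where
`ĥ(k) = ∫₀^x h(s) sin(ks) ds`. For `Re w ≥ 0` the principal root satisfies `Re √(k² + w) ≥ k`,
so `Re c ≥ 0`, hence `Re ⟨h, K h⟩ ≥ 0` and `‖h + K h‖² = ‖h‖² + 2 Re ⟨h, K h⟩ + ‖K h‖² ≥ ‖h‖²`.
All integrals converge absolutely because `(√(k² + w) − k)(√(k² + w) + k) = w` gives
`|c(k)| ≤ |w| / (πk²)`, while `|sin(ks)| ≤ min(1, kx)` on `[0, x]`.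
-/

open ComplexConjugate

namespace Complex

theorem cpow_one_half_mul_self (z : ℂ) : z ^ (1 / 2 : ℂ) * z ^ (1 / 2 : ℂ) = z := by
  rw [← sq, one_div, ← Nat.cast_ofNat, cpow_nat_inv_pow z two_ne_zero]

theorem le_re_cpow_one_half_sq_add {a : ℝ} (ha : 0 ≤ a) {w : ℂ} (hw : 0 ≤ w.re) :
    a ≤ (((a : ℂ) ^ 2 + w) ^ (1 / 2 : ℂ)).re := by
  have hre : ((a : ℂ) ^ 2 + w).re = a ^ 2 + w.re := by norm_cast
  have hnorm : ((a : ℂ) ^ 2 + w).re ≤ ‖(a : ℂ) ^ 2 + w‖ := re_le_norm _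
  have ha2 := sq_nonneg a
  rw [one_div, cpow_inv_two_re, Real.le_sqrt ha (by linarith)]
  linarith

theorem norm_cpow_one_half_sq_add_sub_le {a : ℝ} (ha : 0 < a) {w : ℂ} (hw : 0 ≤ w.re) :
    ‖((a : ℂ) ^ 2 + w) ^ (1 / 2 : ℂ) - a‖ ≤ ‖w‖ / (2 * a) := by
  set r := ((a : ℂ) ^ 2 + w) ^ (1 / 2 : ℂ)
  have hprod : (r - a) * (r + a) = w := by
    linear_combination cpow_one_half_mul_self ((a : ℂ) ^ 2 + w)
  have hsum : 2 * a ≤ ‖r + a‖ := calc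
    2 * a ≤ (r + a).re := by
      have := le_re_cpow_one_half_sq_add ha.le hw
      simp only [add_re, ofReal_re]
      linarith
    _ ≤ ‖r + a‖ := re_le_norm _
  rw [le_div_iff₀ (by positivity), ← hprod, norm_mul]
  gcongr

end Complex

theorem norm_le_norm_add_of_re_inner_nonneg {𝕜 E : Type*} [RCLike 𝕜] [NormedAddCommGroup E]
    [InnerProductSpace 𝕜 E] {x y : E} (h : 0 ≤ RCLike.re (inner 𝕜 x y)) : ‖x‖ ≤ ‖x + y‖ := by
  have hsq : ‖x‖ ^ 2 ≤ ‖x + y‖ ^ 2 := by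
    rw [norm_add_sq (𝕜 := 𝕜)]
    nlinarith [sq_nonneg ‖y‖]
  exact pow_le_pow_iff_left₀ (norm_nonneg _) (norm_nonneg _) two_ne_zero |>.mp hsq

theorem re_integral_nonneg_of_ae {α : Type*} [MeasurableSpace α] {μ : Measure α} {f : α → ℂ}
    (hf : ∀ᵐ a ∂μ, 0 ≤ (f a).re) : 0 ≤ (∫ a, f a ∂μ).re := by
  by_cases hint : Integrable f μ
  · have hre := integral_re hint
    simp only [RCLike.re_to_complex] at hre
    rw [← hre]
    exact integral_nonneg_of_ae hf
  · simp [integral_undef hint]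

theorem eLpNorm_le_eLpNorm_add_of_re_integral_nonneg {α : Type*} [MeasurableSpace α]
    {μ : Measure α} {f g : α → ℂ} (hf : MemLp f 2 μ) (hg : AEStronglyMeasurable g μ)
    (hfg : 0 ≤ (∫ a, conj (f a) * g a ∂μ).re) :
    eLpNorm f 2 μ ≤ eLpNorm (fun a => f a + g a) 2 μ := by
  by_cases hfin : eLpNorm (fun a => f a + g a) 2 μ = ⊤
  · exact hfin ▸ le_top
  have hfg2 : MemLp (fun a => f a + g a) 2 μ := ⟨hf.1.add hg, lt_top_iff_ne_top.mpr hfin⟩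
  have hg2 : MemLp g 2 μ := by
    convert hfg2.sub hf using 1
    ext a
    simp
  have hinner : 0 ≤ RCLike.re (inner ℂ (hf.toLp f) (hg2.toLp g)) := by
    rw [L2.inner_def, RCLike.re_to_complex]
    convert hfg using 2
    refine integral_congr_ae ?_
    filter_upwards [hf.coeFn_toLp, hg2.coeFn_toLp] with a hfa hga
    rw [RCLike.inner_apply, hfa, hga, mul_comm]
  have hnorm := norm_le_norm_add_of_re_inner_nonneg hinner
  rw [← MemLp.toLp_add, Lp.norm_toLp, Lp.norm_toLp] at hnorm
  exact (ENNReal.toReal_le_toReal hf.eLpNorm_ne_top hfg2.eLpNorm_ne_top).mp hnorm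

section KernelPositivity

variable {α K : Type*} [MeasurableSpace α] {μ : Measure α} {h : α → ℂ}

theorem norm_integral_mul_ofReal_le (hh : Integrable h μ) {f : α → ℝ} {C : ℝ}
    (hf : ∀ᵐ s ∂μ, |f s| ≤ C) : ‖∫ s, h s * f s ∂μ‖ ≤ (∫ s, ‖h s‖ ∂μ) * C := by
  rw [← integral_mul_const]
  refine norm_integral_le_of_norm_le (hh.norm.mul_const _) ?_
  filter_upwards [hf] with s hs
  rw [norm_mul, Complex.norm_real, Real.norm_eq_abs]
  exact mul_le_mul_of_nonneg_left hs (norm_nonneg _)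

variable [MeasurableSpace K] {ν : Measure K} [SFinite μ] [SFinite ν]
  {e : K → α → ℝ} {c : K → ℂ} {b : K → ℝ}

theorem integral_mul_integral_kernel_eq (hh : Integrable h μ) (he : Measurable (Function.uncurry e))
    (hc : Measurable c) (hb : ∀ᵐ s ∂μ, ∀ k, |e k s| ≤ b k)
    (hB : Integrable (fun k => ‖c k‖ * b k ^ 2) ν) {y : α} (hy : ∀ k, |e k y| ≤ b k) :
    ∫ s, h s * ∫ k, c k * e k s * e k y ∂ν ∂μ =
      ∫ k, c k * (∫ s, h s * e k s ∂μ) * e k y ∂ν := by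
  have hint : Integrable (fun p : α × K => h p.1 * (c p.2 * e p.2 p.1 * e p.2 y)) (μ.prod ν) := by
    refine (hh.norm.mul_prod hB).mono' (hh.1.comp_fst.mul (by fun_prop)) ?_
    filter_upwards [Measure.quasiMeasurePreserving_fst.ae hb] with p hp
    simp only [norm_mul, Complex.norm_real, Real.norm_eq_abs]
    refine mul_le_mul_of_nonneg_left ?_ (norm_nonneg _)
    have hb0 : 0 ≤ b p.2 := (abs_nonneg _).trans (hp p.2)
    calc ‖c p.2‖ * |e p.2 p.1| * |e p.2 y| ≤ ‖c p.2‖ * b p.2 * b p.2 := by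
          gcongr
          exacts [hp p.2, hy p.2]
      _ = ‖c p.2‖ * b p.2 ^ 2 := by ring
  calc ∫ s, h s * ∫ k, c k * e k s * e k y ∂ν ∂μ
      = ∫ s, ∫ k, h s * (c k * e k s * e k y) ∂ν ∂μ := by simp_rw [integral_const_mul]
    _ = ∫ k, ∫ s, h s * (c k * e k s * e k y) ∂μ ∂ν := integral_integral_swap hint
    _ = ∫ k, c k * (∫ s, h s * e k s ∂μ) * e k y ∂ν := by
      congr with k
      simp_rw [show ∀ s, h s * (c k * e k s * e k y) = h s * e k s * (c k * e k y) from
        fun s => by ring, integral_mul_const]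
      ring

theorem integral_conj_mul_integral_eq (hh : Integrable h μ) (he : Measurable (Function.uncurry e))
    (hc : Measurable c) (hb : ∀ᵐ s ∂μ, ∀ k, |e k s| ≤ b k)
    (hB : Integrable (fun k => ‖c k‖ * b k ^ 2) ν) :
    ∫ y, conj (h y) * ∫ k, c k * (∫ s, h s * e k s ∂μ) * e k y ∂ν ∂μ =
      ∫ k, c k * (‖∫ s, h s * e k s ∂μ‖ ^ 2 : ℝ) ∂ν := by
  set S : K → ℂ := fun k => ∫ s, h s * e k s ∂μ
  set L := ∫ s, ‖h s‖ ∂μ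
  have hS : AEStronglyMeasurable S ν :=
    AEStronglyMeasurable.integral_prod_right' (f := fun p : K × α => h p.2 * e p.1 p.2)
      (hh.1.comp_snd.mul (by fun_prop))
  have hint : Integrable (fun p : α × K => conj (h p.1) * (c p.2 * S p.2 * e p.2 p.1))
      (μ.prod ν) := by
    refine (hh.norm.mul_prod (hB.const_mul L)).mono'
      ((hh.1.star).comp_fst.mul ((hc.aestronglyMeasurable.mul hS).comp_snd.mul
        (by fun_prop : Measurable fun p : α × K => (e p.2 p.1 : ℂ)).aestronglyMeasurable)) ?_
    filter_upwards [Measure.quasiMeasurePreserving_fst.ae hb] with p hp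
    simp only [norm_mul, Complex.norm_real, Real.norm_eq_abs, RCLike.norm_conj]
    refine mul_le_mul_of_nonneg_left ?_ (norm_nonneg _)
    have hSk : ‖S p.2‖ ≤ L * b p.2 := norm_integral_mul_ofReal_le hh (hb.mono fun s hs => hs p.2)
    have hb0 : 0 ≤ b p.2 := (abs_nonneg _).trans (hp p.2)
    have hL0 : 0 ≤ L := integral_nonneg fun s => norm_nonneg _
    calc ‖c p.2‖ * ‖S p.2‖ * |e p.2 p.1| ≤ ‖c p.2‖ * (L * b p.2) * b p.2 := by
          gcongr
          exact hp p.2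
      _ = L * (‖c p.2‖ * b p.2 ^ 2) := by ring
  calc ∫ y, conj (h y) * ∫ k, c k * S k * e k y ∂ν ∂μ
      = ∫ y, ∫ k, conj (h y) * (c k * S k * e k y) ∂ν ∂μ := by simp_rw [integral_const_mul]
    _ = ∫ k, ∫ y, conj (h y) * (c k * S k * e k y) ∂μ ∂ν := integral_integral_swap hint
    _ = ∫ k, c k * (‖S k‖ ^ 2 : ℝ) ∂ν := by
      congr with k
      simp_rw [show ∀ y, conj (h y) * (c k * S k * e k y) = conj (h y * e k y) * (c k * S k) from
        fun y => by simp only [map_mul, Complex.conj_ofReal]; ring, integral_mul_const,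
        integral_conj]
      rw [Complex.ofReal_pow, ← Complex.conj_mul']
      ring

theorem re_integral_conj_mul_integral_kernel_nonneg_s15 (hh : Integrable h μ)
    (he : Measurable (Function.uncurry e)) (hc : Measurable c) (hc_re : ∀ᵐ k ∂ν, 0 ≤ (c k).re)
    (hb : ∀ᵐ s ∂μ, ∀ k, |e k s| ≤ b k) (hB : Integrable (fun k => ‖c k‖ * b k ^ 2) ν) :
    0 ≤ (∫ y, conj (h y) * ∫ s, h s * ∫ k, c k * e k s * e k y ∂ν ∂μ ∂μ).re := by
  have hG : (fun y => conj (h y) * ∫ s, h s * ∫ k, c k * e k s * e k y ∂ν ∂μ) =ᵐ[μ]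
      fun y => conj (h y) * ∫ k, c k * (∫ s, h s * e k s ∂μ) * e k y ∂ν := by
    filter_upwards [hb] with y hy
    rw [integral_mul_integral_kernel_eq hh he hc hb hB hy]
  rw [integral_congr_ae hG, integral_conj_mul_integral_eq hh he hc hb hB]
  refine re_integral_nonneg_of_ae ?_
  filter_upwards [hc_re] with k hk
  rw [Complex.re_mul_ofReal]
  positivity

theorem aestronglyMeasurable_integral_mul_integral_kernel (hh : AEStronglyMeasurable h μ)
    (he : Measurable (Function.uncurry e)) (hc : Measurable c) :
    AEStronglyMeasurable (fun y => ∫ s, h s * ∫ k, c k * e k s * e k y ∂ν ∂μ) μ := by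
  have hK : StronglyMeasurable fun p : α × α => ∫ k, c k * e k p.2 * e k p.1 ∂ν :=
    StronglyMeasurable.integral_prod_right'
      (f := fun r : (α × α) × K => c r.2 * e r.2 r.1.2 * e r.2 r.1.1) (by fun_prop)
  exact (hh.comp_snd.mul hK.aestronglyMeasurable).integral_prod_right'

end KernelPositivity

def phiMultiplier (w : ℂ) (k : ℝ) : ℂ :=
  (2 / (Real.pi * k) : ℝ) * (((k : ℂ) ^ 2 + w) ^ (1 / 2 : ℂ) - k)

theorem Phi_eq_integral_phiMultiplier (s y : ℝ) (w : ℂ) :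
    Phi s y w = ∫ k in Ioi 0, phiMultiplier w k * Real.sin (k * s) * Real.sin (k * y) := by
  refine congr_arg _ (funext fun k => ?_)
  rcases eq_or_ne k 0 with rfl | hk
  · simp [phiMultiplier]
  · have hπ := Real.pi_ne_zero
    simp only [phiMultiplier, one_div]
    push_cast
    field_simp

theorem measurable_phiMultiplier (w : ℂ) : Measurable (phiMultiplier w) := by
  unfold phiMultiplier
  fun_prop

theorem re_phiMultiplier_nonneg {w : ℂ} (hw : 0 ≤ w.re) {k : ℝ} (hk : 0 ≤ k) :
    0 ≤ (phiMultiplier w k).re := by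
  rw [phiMultiplier, Complex.re_ofReal_mul, Complex.sub_re, Complex.ofReal_re]
  exact mul_nonneg (by positivity) (sub_nonneg.mpr (Complex.le_re_cpow_one_half_sq_add hk hw))

theorem norm_phiMultiplier_le {w : ℂ} (hw : 0 ≤ w.re) {k : ℝ} (hk : 0 < k) :
    ‖phiMultiplier w k‖ ≤ ‖w‖ / (Real.pi * k ^ 2) := by
  rw [phiMultiplier, norm_mul, Complex.norm_real, Real.norm_of_nonneg (by positivity)]
  calc 2 / (Real.pi * k) * ‖((k : ℂ) ^ 2 + w) ^ (1 / 2 : ℂ) - k‖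
      ≤ 2 / (Real.pi * k) * (‖w‖ / (2 * k)) := by
        gcongr
        exact Complex.norm_cpow_one_half_sq_add_sub_le hk hw
    _ = ‖w‖ / (Real.pi * k ^ 2) := by field_simp

theorem abs_sin_mul_le_min {x s : ℝ} (hs : s ∈ Icc 0 x) (k : ℝ) :
    |Real.sin (k * s)| ≤ min 1 (|k| * x) := by
  refine le_min (Real.abs_sin_le_one _) ?_
  calc |Real.sin (k * s)| ≤ |k * s| := Real.abs_sin_le_abs
    _ = |k| * s := by rw [abs_mul, abs_of_nonneg hs.1]
    _ ≤ |k| * x := by gcongr; exact hs.2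

theorem min_one_sq_mul_one_add_sq_le {t : ℝ} (ht : 0 ≤ t) :
    min 1 t ^ 2 * (1 + t ^ 2) ≤ 2 * t ^ 2 := by
  rcases le_total t 1 with h | h
  · rw [min_eq_right h]
    nlinarith [mul_le_mul h h ht zero_le_one, sq_nonneg t]
  · rw [min_eq_left h]
    nlinarith

theorem integrableOn_norm_phiMultiplier_mul_min_sq {w : ℂ} (hw : 0 ≤ w.re) {x : ℝ} (hx : 0 < x) :
    IntegrableOn (fun k => ‖phiMultiplier w k‖ * min 1 (|k| * x) ^ 2) (Ioi 0) := by
  have hdom : Integrable fun k : ℝ => 2 * ‖w‖ * x ^ 2 / Real.pi * (1 + (k * x) ^ 2)⁻¹ :=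
    (integrable_inv_one_add_sq.comp_mul_right' hx.ne').const_mul _
  refine hdom.integrableOn.mono' (by unfold phiMultiplier; fun_prop) ?_
  filter_upwards [ae_restrict_mem measurableSet_Ioi] with k (hk : 0 < k)
  rw [Real.norm_of_nonneg (by positivity), abs_of_pos hk]
  have hmin := min_one_sq_mul_one_add_sq_le (mul_pos hk hx).le
  calc ‖phiMultiplier w k‖ * min 1 (k * x) ^ 2
      ≤ ‖w‖ / (Real.pi * k ^ 2) * (2 * (k * x) ^ 2 / (1 + (k * x) ^ 2)) := by
        gcongr
        · exact norm_phiMultiplier_le hw hk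
        · rwa [le_div_iff₀ (by positivity)]
    _ = 2 * ‖w‖ * x ^ 2 / Real.pi * (1 + (k * x) ^ 2)⁻¹ := by field_simp

/-- **Lower `L²` bound for the perturbed identity operator.** For `x > 0`, `Re w > 0` and
`h ∈ L²([0,x];ℂ)`: `‖h‖_{L²([0,x])} ≤ ‖y ↦ h(y) + ∫₀^x h(s)Φ(s,y,w) ds‖_{L²([0,x])}`. -/
theorem stmt_15 (x : ℝ) (hx : 0 < x) (w : ℂ) (hw : 0 < w.re)
    (h : ℝ → ℂ) (hh : MemLp h 2 (volume.restrict (Icc (0:ℝ) x))) :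
    eLpNorm h 2 (volume.restrict (Icc (0:ℝ) x)) ≤
      eLpNorm (fun y => h y + ∫ s in (0:ℝ)..x, h s * Phi s y w) 2
        (volume.restrict (Icc (0:ℝ) x)) := by
  have hsin : Measurable fun p : ℝ × ℝ => Real.sin (p.1 * p.2) := by fun_prop
  have hb : ∀ᵐ s ∂volume.restrict (Icc 0 x), ∀ k, |Real.sin (k * s)| ≤ min 1 (|k| * x) := by
    filter_upwards [ae_restrict_mem measurableSet_Icc] with s hs
    exact abs_sin_mul_le_min hs
  have hc_re : ∀ᵐ k ∂volume.restrict (Ioi 0), 0 ≤ (phiMultiplier w k).re := by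
    filter_upwards [ae_restrict_mem measurableSet_Ioi] with k (hk : 0 < k)
    exact re_phiMultiplier_nonneg hw.le hk.le
  simp_rw [intervalIntegral.integral_of_le hx.le, ← integral_Icc_eq_integral_Ioc,
    Phi_eq_integral_phiMultiplier]
  have : IsFiniteMeasure (volume.restrict (Icc (0:ℝ) x)) := isFiniteMeasure_restrict.mpr (by simp)
  exact eLpNorm_le_eLpNorm_add_of_re_integral_nonneg hh
    (aestronglyMeasurable_integral_mul_integral_kernel hh.1 hsin (measurable_phiMultiplier w))
    (re_integral_conj_mul_integral_kernel_nonneg_s15 (hh.integrable one_le_two) hsin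
      (measurable_phiMultiplier w) hc_re hb
      (integrableOn_norm_phiMultiplier_mul_min_sq hw.le hx))

end
end
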